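/- Let α > 0 and let f : (0,∞) → (0,∞) be nonincreasing, right-continuous and regularly varying at 0 with index -α, with f(x) → ∞ as x ↓ 0. Then there exist constants C > 0 and v₀ > 0 such that f(f^←(v)−) ≤ C·v for all v ≥ v₀, where f(z−) denotes the left limit of f at z. -/

import Mathlib

/-!
Regular variation at `λ = 1/2` gives `f (y/2) ≤ C f y` for all small `y`, with any
`C > 2^α`. For large `v`, `z = f^←(v)` is small and positive, and some `y ∈ [z, 2z)` has
`f y ≤ v`; since `y/2 < z`, monotonicity gives `f(z−) ≤ f (y/2) ≤ C f y ≤ C v`.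
-/

open MeasureTheory Filter Topology

/-- Generalized inverse of a nonincreasing function `f : (0,∞) → (0,∞)`:
`f^←(y) = inf {x > 0 : f x ≤ y}`. -/
noncomputable def geninv (f : ℝ → ℝ) (y : ℝ) : ℝ := sInf {x : ℝ | 0 < x ∧ f x ≤ y}

theorem Filter.Tendsto.eventually_le_mul_of_div {ι : Type*} {l : Filter ι} {g h : ι → ℝ}
    {L C : ℝ} (hgh : Tendsto (fun x => g x / h x) l (𝓝 L)) (hLC : L < C)
    (hh : ∀ᶠ x in l, 0 < h x) : ∀ᶠ x in l, g x ≤ C * h x := by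
  filter_upwards [hgh.eventually (eventually_lt_nhds hLC), hh] with x hlt hpos
  exact ((div_lt_iff₀ hpos).1 hlt).le

theorem AntitoneOn.leftLim_le_of_Ici {α β : Type*} [LinearOrder α] [DenselyOrdered α]
    [TopologicalSpace α] [OrderTopology α] [ConditionallyCompleteLinearOrder β] [TopologicalSpace β]
    [OrderTopology β] {f : α → β} {w z : α} (hf : AntitoneOn f (Set.Ici w)) (hwz : w < z) :
    Function.leftLim f z ≤ f w := by
  have := nhdsLT_neBot_of_exists_lt ⟨w, hwz⟩
  set g : α → β := fun x => f (max x w)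
  have hg : Antitone g := fun a b hab =>
    hf (le_max_right a w) (le_max_right b w) (max_le_max_right w hab)
  have hfg : f =ᶠ[𝓝[<] z] g := by
    filter_upwards [Ioo_mem_nhdsLT hwz] with x hx
    simp only [g, max_eq_left hx.1.le]
  calc Function.leftLim f z = Function.leftLim g z :=
        leftLim_eq_of_tendsto ((hg.tendsto_leftLim z).congr' hfg.symm)
    _ ≤ g w := hg.leftLim_le hwz
    _ = f w := by simp only [g, max_self]

section geninv

variable {f : ℝ → ℝ} {v x : ℝ}

theorem geninv_le (hx : 0 < x) (hfx : f x ≤ v) : geninv f v ≤ x :=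
  csInf_le ⟨0, fun _ hy => hy.1.le⟩ ⟨hx, hfx⟩

theorem geninv_pos (hinf : Tendsto f (𝓝[>] 0) atTop) (hx : 0 < x) (hfx : f x ≤ v) :
    0 < geninv f v := by
  obtain ⟨w, hw, hfw⟩ :=
    mem_nhdsGT_iff_exists_Ioo_subset.1 (hinf.eventually (eventually_gt_atTop v))
  refine hw.trans_le (le_csInf ⟨x, hx, hfx⟩ fun y ⟨hy, hfy⟩ => ?_)
  by_contra! hyw
  exact (hfw ⟨hy, hyw⟩ : v < f y).not_ge hfy

/-- Positivity of `f^←(v)` rules out the junk value `sInf ∅ = 0`. -/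
theorem exists_lt_of_geninv_lt {b : ℝ} (hpos : 0 < geninv f v) (hb : geninv f v < b) :
    ∃ y, 0 < y ∧ f y ≤ v ∧ y < b := by
  have hne : {x : ℝ | 0 < x ∧ f x ≤ v}.Nonempty := by
    by_contra hempty
    rw [Set.not_nonempty_iff_eq_empty] at hempty
    simp [geninv, hempty] at hpos
  obtain ⟨y, ⟨hy, hfy⟩, hyb⟩ := exists_lt_of_csInf_lt hne hb
  exact ⟨y, hy, hfy, hyb⟩

end geninv

theorem stmt12_general (α : ℝ) (f : ℝ → ℝ)
    (hmono : AntitoneOn f (Set.Ioi (0 : ℝ)))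
    (hrv : ∀ l : ℝ, 0 < l →
      Tendsto (fun x : ℝ => f (l * x) / f x) (nhdsWithin 0 (Set.Ioi 0)) (nhds (l ^ (-α))))
    (hinf : Tendsto f (nhdsWithin 0 (Set.Ioi 0)) atTop) :
    ∃ C : ℝ, 0 < C ∧ ∃ v₀ : ℝ, 0 < v₀ ∧
      ∀ v : ℝ, v₀ ≤ v → Function.leftLim f (geninv f v) ≤ C * v := by
  set C : ℝ := (1 / 2 : ℝ) ^ (-α) + 1
  obtain ⟨δ, hδ, hdoubling⟩ := mem_nhdsGT_iff_exists_Ioo_subset.1 <|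
    (hrv (1 / 2) one_half_pos).eventually_le_mul_of_div (lt_add_one _)
      (hinf.eventually_gt_atTop 0)
  refine ⟨C, by positivity, max (f (δ / 2)) 1, lt_max_of_lt_right one_pos, fun v hv => ?_⟩
  have hfδ : f (δ / 2) ≤ v := le_of_max_le_left hv
  have hz : 0 < geninv f v := geninv_pos hinf (half_pos hδ) hfδ
  have hzδ : geninv f v ≤ δ / 2 := geninv_le (half_pos hδ) hfδ
  obtain ⟨y, hy, hfy, hyz⟩ :=
    exists_lt_of_geninv_lt hz (show geninv f v < 2 * geninv f v by linarith)
  calc Function.leftLim f (geninv f v) ≤ f (1 / 2 * y) :=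
        (hmono.mono (Set.Ici_subset_Ioi.2 (by positivity))).leftLim_le_of_Ici (by linarith)
    _ ≤ C * f y := hdoubling ⟨hy, by linarith⟩
    _ ≤ C * v := by gcongr

/-- if `f : (0,∞) → (0,∞)` is nonincreasing, right-continuous and regularly
varying at 0 with index `-α` (`α > 0`), with `f(x) → ∞` as `x ↓ 0`, then there exist
`C > 0` and `v₀ > 0` such that `f(f^←(v)−) ≤ C v` for all `v ≥ v₀`. -/
theorem stmt12 (α : ℝ) (hα : 0 < α) (f : ℝ → ℝ)
    (hpos : ∀ x : ℝ, 0 < x → 0 < f x)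
    (hmono : AntitoneOn f (Set.Ioi (0 : ℝ)))
    (hrc : ∀ x : ℝ, 0 < x → ContinuousWithinAt f (Set.Ici x) x)
    (hrv : ∀ l : ℝ, 0 < l →
      Tendsto (fun x : ℝ => f (l * x) / f x) (nhdsWithin 0 (Set.Ioi 0)) (nhds (l ^ (-α))))
    (hinf : Tendsto f (nhdsWithin 0 (Set.Ioi 0)) atTop) :
    ∃ C : ℝ, 0 < C ∧ ∃ v₀ : ℝ, 0 < v₀ ∧
      ∀ v : ℝ, v₀ ≤ v → Function.leftLim f (geninv f v) ≤ C * v :=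
  stmt12_general α f hmono hrv hinf
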